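/- arXiv:2306.02734 — 4 statements merged into one kernel-verified Lean document; each statement's English description precedes it below -/
import Mathlib

section
/- Every countably presentable flat module over an associative ring A is the colimit of a countable directed chain of finitely generated free A-modules. -/
universe u

noncomputable section RTensorPrelude
variable (A : Type u) [Ring A]

/-- Relations defining the balanced tensor product `P ⊗_A M` of a right `A`-module `P`
and a left `A`-module `M`, inside `P ⊗_ℤ M`. -/
def TensorRel (P : Type u) [AddCommGroup P] [Module Aᵐᵒᵖ P]
    (M : Type u) [AddCommGroup M] [Module A M] :
    AddSubgroup (TensorProduct ℤ P M) :=
  AddSubgroup.closure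
    {x | ∃ (a : A) (p : P) (m : M),
      x = (MulOpposite.op a • p) ⊗ₜ[ℤ] m - p ⊗ₜ[ℤ] (a • m)}

/-- The balanced tensor product `P ⊗_A M` over a (possibly noncommutative) ring `A`. -/
def RTensor (P : Type u) [AddCommGroup P] [Module Aᵐᵒᵖ P]
    (M : Type u) [AddCommGroup M] [Module A M] : Type u :=
  TensorProduct ℤ P M ⧸ TensorRel A P M

variable (P : Type u) [AddCommGroup P] [Module Aᵐᵒᵖ P]
  (Q : Type u) [AddCommGroup Q] [Module Aᵐᵒᵖ Q]
  (M : Type u) [AddCommGroup M] [Module A M]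

instance : AddCommGroup (RTensor A P M) :=
  inferInstanceAs (AddCommGroup (TensorProduct ℤ P M ⧸ TensorRel A P M))

/-- The image of a simple tensor `p ⊗ m` in `P ⊗_A M`. -/
def RTensor.mk (p : P) (m : M) : RTensor A P M :=
  QuotientAddGroup.mk (p ⊗ₜ[ℤ] m)

variable {A P Q M}

theorem RTensor.mk_rel (a : A) (p : P) (m : M) :
    RTensor.mk A P M (MulOpposite.op a • p) m = RTensor.mk A P M p (a • m) :=
  QuotientAddGroup.eq_iff_sub_mem.mpr (AddSubgroup.subset_closure ⟨a, p, m, rfl⟩)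

/-- Functoriality of the balanced tensor product in the right-module variable. -/
def RTensor.map (g : P →ₗ[Aᵐᵒᵖ] Q) : RTensor A P M →+ RTensor A Q M :=
  QuotientAddGroup.lift _
    ((QuotientAddGroup.mk' (TensorRel A Q M)).comp
      (LinearMap.rTensor M g.toAddMonoidHom.toIntLinearMap).toAddMonoidHom)
    ((AddSubgroup.closure_le _).2 (by
      rintro x ⟨a, p, m, rfl⟩
      refine (AddMonoidHom.mem_ker (f := ((QuotientAddGroup.mk' (TensorRel A Q M)).comp
        (LinearMap.rTensor M g.toAddMonoidHom.toIntLinearMap).toAddMonoidHom))).2 ?_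
      rw [map_sub, sub_eq_zero]
      show RTensor.mk A Q M (g.toAddMonoidHom.toIntLinearMap (MulOpposite.op a • p)) m
        = RTensor.mk A Q M (g.toAddMonoidHom.toIntLinearMap p) (a • m)
      show RTensor.mk A Q M (g (MulOpposite.op a • p)) m = RTensor.mk A Q M (g p) (a • m)
      rw [g.map_smul, RTensor.mk_rel]))

theorem RTensor.map_mk (g : P →ₗ[Aᵐᵒᵖ] Q) (p : P) (m : M) :
    RTensor.map g (RTensor.mk A P M p m) = RTensor.mk A Q M (g p) m := rfl

end RTensorPrelude

/-- A left module `M` over a ring `A` is flat if the functor `(- ⊗_A M)` preserves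
injectivity of morphisms of right `A`-modules (equivalently, `(- ⊗_A M)` is exact). -/
def IsFlatModule (A : Type u) [Ring A] (M : Type u) [AddCommGroup M] [Module A M] : Prop :=
  ∀ (P Q : Type u) [AddCommGroup P] [Module Aᵐᵒᵖ P] [AddCommGroup Q] [Module Aᵐᵒᵖ Q]
    (g : P →ₗ[Aᵐᵒᵖ] Q), Function.Injective g →
      Function.Injective (RTensor.map (M := M) g)

/-- A left `A`-module is countably presentable if it is the cokernel of a morphism
of free `A`-modules with (at most) countably many generators. -/
def CountablyPresentable (A : Type u) [Ring A] (M : Type u) [AddCommGroup M] [Module A M] :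
    Prop :=
  ∃ f : (ℕ →₀ A) →ₗ[A] (ℕ →₀ A),
    Nonempty ((((ℕ →₀ A) ⧸ LinearMap.range f)) ≃ₗ[A] M)

/-!
Write `M = (ℕ →₀ A) ⧸ ⟨r₀, r₁, …⟩`. Keeping only the first `s` relations and the finitely
many generators they involve exhibits `M` as the colimit of a sequence of finitely presented
modules. By the equational criterion, flatness makes every map from a finitely presented module
to `M` factor through a finite free module; that free module maps back into a later stage,
compatibly with the transition maps up to relations that die further on. Interleaving the stages
with these free modules yields a chain of finite free modules with the same colimit.
-/

open Filter
namespace RTensor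

variable {A : Type u} [Ring A]
  {P : Type u} [AddCommGroup P] [Module Aᵐᵒᵖ P]
  {Q : Type u} [AddCommGroup Q] [Module Aᵐᵒᵖ Q]
  {M : Type u} [AddCommGroup M] [Module A M]

theorem mk_add_left (p p' : P) (m : M) :
    mk A P M (p + p') m = mk A P M p m + mk A P M p' m :=
  congrArg QuotientAddGroup.mk (TensorProduct.add_tmul p p' m)

theorem mk_sub_left (p p' : P) (m : M) :
    mk A P M (p - p') m = mk A P M p m - mk A P M p' m :=
  congrArg QuotientAddGroup.mk (TensorProduct.sub_tmul p p' m)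

theorem mk_add_right (p : P) (m m' : M) :
    mk A P M p (m + m') = mk A P M p m + mk A P M p m' :=
  congrArg QuotientAddGroup.mk (TensorProduct.tmul_add p m m')

theorem mk_zero_right (p : P) : mk A P M p 0 = 0 :=
  congrArg QuotientAddGroup.mk (TensorProduct.tmul_zero M p)

theorem mk_sum_right {ι : Type*} (s : Finset ι) (p : P) (m : ι → M) :
    mk A P M p (∑ i ∈ s, m i) = ∑ i ∈ s, mk A P M p (m i) :=
  map_sum (AddMonoidHom.mk' (mk A P M p) (mk_add_right p)) m s

@[elab_as_elim]
theorem induction_on {C : RTensor A P M → Prop} (t : RTensor A P M) (zero : C 0)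
    (mk : ∀ p m, C (mk A P M p m)) (add : ∀ x y, C x → C y → C (x + y)) : C t := by
  obtain ⟨x, rfl⟩ := QuotientAddGroup.mk_surjective t
  induction x using TensorProduct.induction_on with
  | zero => exact zero
  | tmul p m => exact mk p m
  | add x y hx hy => exact add _ _ hx hy

theorem hom_ext {T : Type*} [AddCommGroup T] {f g : RTensor A P M →+ T}
    (h : ∀ p m, f (mk A P M p m) = g (mk A P M p m)) : f = g := by
  ext t
  induction t using induction_on with
  | zero => simp only [map_zero]
  | mk p m => exact h p m
  | add x y hx hy => simp only [map_add, hx, hy]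

theorem exists_eq_sum_mk (t : RTensor A P M) :
    ∃ (n : ℕ) (p : Fin n → P) (m : Fin n → M), t = ∑ j, mk A P M (p j) (m j) := by
  induction t using induction_on with
  | zero => exact ⟨0, Fin.elim0, Fin.elim0, by simp⟩
  | mk p m => exact ⟨1, fun _ => p, fun _ => m, by simp⟩
  | add x y hx hy =>
    obtain ⟨n₁, p₁, m₁, rfl⟩ := hx
    obtain ⟨n₂, p₂, m₂, rfl⟩ := hy
    exact ⟨n₁ + n₂, Fin.append p₁ p₂, Fin.append m₁ m₂, by simp [Fin.sum_univ_add]⟩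

def lift {T : Type*} [AddCommGroup T] (B : P →+ M →+ T)
    (hB : ∀ (a : A) p m, B (MulOpposite.op a • p) m = B p (a • m)) : RTensor A P M →+ T :=
  QuotientAddGroup.lift (TensorRel A P M)
    (TensorProduct.liftAddHom B fun z p m => by
      rw [map_zsmul, AddMonoidHom.smul_apply, map_zsmul])
    ((AddSubgroup.closure_le _).2 <| by
      rintro _ ⟨a, p, m, rfl⟩
      simp [hB])

theorem lift_mk {T : Type*} [AddCommGroup T] (B : P →+ M →+ T)
    (hB : ∀ (a : A) p m, B (MulOpposite.op a • p) m = B p (a • m)) (p : P) (m : M) :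
    lift B hB (mk A P M p m) = B p m :=
  rfl

theorem map_comp_apply {Q' : Type u} [AddCommGroup Q'] [Module Aᵐᵒᵖ Q']
    (g : P →ₗ[Aᵐᵒᵖ] Q) (g' : Q →ₗ[Aᵐᵒᵖ] Q') (t : RTensor A P M) :
    map (M := M) (g' ∘ₗ g) t = map g' (map (M := M) g t) :=
  DFunLike.congr_fun (hom_ext (f := map (M := M) (g' ∘ₗ g)) (g := (map g').comp (map g))
    fun _ _ => rfl) t

def lid : RTensor A A M →+ M :=
  lift (smulAddHom A M) fun _ _ _ => by simp [mul_smul]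

theorem lid_mk (a : A) (m : M) : lid (mk A A M a m) = a • m :=
  lift_mk _ _ a m

theorem quotientMk_mk_eq_of_map_eq (g : P →ₗ[Aᵐᵒᵖ] Q) {p p' : P} (h : g p = g p') (m : M) :
    (QuotientAddGroup.mk (mk A P M p m) :
      RTensor A P M ⧸ (map (M := M) (LinearMap.ker g).subtype).range) = mk A P M p' m :=
  QuotientAddGroup.eq_iff_sub_mem.2
    ⟨mk A _ M ⟨p - p', by simp [h]⟩ m, by rw [map_mk, Submodule.subtype_apply, mk_sub_left]⟩

/-- For surjective `g`, an inverse of `map g` modulo the image of `ker g ⊗ M`, obtained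
from any set-theoretic section of `g`. -/
noncomputable def cokerInv (g : P →ₗ[Aᵐᵒᵖ] Q) (hg : Function.Surjective g) :
    RTensor A Q M →+ RTensor A P M ⧸ (map (M := M) (LinearMap.ker g).subtype).range :=
  lift
    (AddMonoidHom.mk'
      (fun q => AddMonoidHom.mk' (fun m => mk A P M (Function.surjInv hg q) m)
        fun m m' => by rw [mk_add_right]; rfl)
      fun q q' => by
        ext m
        refine (quotientMk_mk_eq_of_map_eq g ?_ m).trans (congrArg _ (mk_add_left _ _ m))
        simp only [map_add, Function.surjInv_eq])
    fun a q m => by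
      refine (quotientMk_mk_eq_of_map_eq g ?_ m).trans (congrArg _ (mk_rel a _ m))
      simp only [map_smul, Function.surjInv_eq]

theorem cokerInv_map (g : P →ₗ[Aᵐᵒᵖ] Q) (hg : Function.Surjective g) (t : RTensor A P M) :
    cokerInv g hg (map g t) = t :=
  DFunLike.congr_fun (hom_ext (f := (cokerInv g hg).comp (map g)) (g := QuotientAddGroup.mk' _)
    fun p m => quotientMk_mk_eq_of_map_eq g (Function.surjInv_eq hg (g p)) m) t

theorem mem_range_map_ker_subtype (g : P →ₗ[Aᵐᵒᵖ] Q) (hg : Function.Surjective g)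
    {t : RTensor A P M} (ht : map g t = 0) :
    t ∈ (map (M := M) (LinearMap.ker g).subtype).range := by
  rw [← QuotientAddGroup.eq_zero_iff, ← cokerInv_map g hg, ht, map_zero]

end RTensor

namespace IsFlatModule

variable {A : Type u} [Ring A] {M : Type u} [AddCommGroup M] [Module A M]

theorem exists_eq_sum_mk_of_map_eq_zero (hflat : IsFlatModule A M)
    {P Q : Type u} [AddCommGroup P] [Module Aᵐᵒᵖ P] [AddCommGroup Q] [Module Aᵐᵒᵖ Q]
    (g : P →ₗ[Aᵐᵒᵖ] Q) {t : RTensor A P M} (ht : RTensor.map g t = 0) :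
    ∃ (n : ℕ) (p : Fin n → P) (m : Fin n → M),
      (∀ j, g (p j) = 0) ∧ t = ∑ j, RTensor.mk A P M (p j) (m j) := by
  have ht' : RTensor.map (M := M) g.rangeRestrict t = 0 :=
    hflat _ _ _ (Submodule.injective_subtype _) <| by
      rw [← RTensor.map_comp_apply, LinearMap.subtype_comp_codRestrict, ht, map_zero]
  obtain ⟨s, rfl⟩ := RTensor.mem_range_map_ker_subtype _ g.surjective_rangeRestrict ht'
  obtain ⟨n, p, m, rfl⟩ := s.exists_eq_sum_mk
  refine ⟨n, fun j => p j, m, fun j => ?_, by simp [RTensor.map_mk]⟩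
  exact LinearMap.mem_ker.1 (LinearMap.ker_rangeRestrict g ▸ (p j).2)

/-- The equational criterion for flatness. -/
theorem exists_factor_of_map_eq_zero (hflat : IsFlatModule A M) {n : ℕ}
    (X : (Fin n → A) →ₗ[A] M) {a : Fin n → A} (ha : X a = 0) :
    ∃ (q : ℕ) (α : (Fin n → A) →ₗ[A] (Fin q → A)) (Y : (Fin q → A) →ₗ[A] M),
      Y ∘ₗ α = X ∧ α a = 0 := by
  classical
  let e := Pi.basisFun A (Fin n)
  let π : (Fin n → A) →ₗ[Aᵐᵒᵖ] A :=
    { toFun := (a ⬝ᵥ ·)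
      map_add' := dotProduct_add a
      map_smul' := fun c v => dotProduct_smul c a v }
  let T := ∑ i, RTensor.mk A _ M (e i) (X (e i))
  have hT : RTensor.map π T = 0 := calc
    RTensor.map π T = ∑ i, RTensor.mk A A M 1 (a i • X (e i)) := by
      refine (map_sum _ _ _).trans (Finset.sum_congr rfl fun i _ => ?_)
      rw [RTensor.map_mk, ← RTensor.mk_rel]
      simp [π, e]
    _ = RTensor.mk A A M 1 (X a) := by
      conv_rhs => rw [← e.sum_repr a]
      simp [RTensor.mk_sum_right, e]
    _ = 0 := by rw [ha, RTensor.mk_zero_right]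
  obtain ⟨q, k, y, hk, hTk⟩ := hflat.exists_eq_sum_mk_of_map_eq_zero π hT
  refine ⟨q, Fintype.linearCombination A fun i j => k j i, Fintype.linearCombination A y,
    e.ext fun i => ?_, funext fun j => ?_⟩
  · -- the `i`-th coordinate `Aⁿ ⊗ M → M` turns `hTk` into `X (e i) = ∑ j, k j i • y j`
    have hcoord := congrArg (RTensor.lid.comp (RTensor.map (M := M) (LinearMap.proj i))) hTk
    simp only [T, e, Pi.basisFun_apply, map_sum, AddMonoidHom.coe_comp, Function.comp_apply,
      RTensor.map_mk, LinearMap.coe_proj, Function.eval, Pi.single_apply, RTensor.lid_mk,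
      ite_smul, one_smul, zero_smul, Finset.sum_ite_eq, Finset.mem_univ, ↓reduceIte] at hcoord
    simp [e, hcoord, Fintype.linearCombination_apply]
  · simpa [π, dotProduct, Fintype.linearCombination_apply] using hk j

theorem exists_factor_of_fg (hflat : IsFlatModule A M) {n : ℕ}
    (X : (Fin n → A) →ₗ[A] M) {K : Submodule A (Fin n → A)} (hK : K.FG)
    (hKX : K ≤ LinearMap.ker X) :
    ∃ (q : ℕ) (α : (Fin n → A) →ₗ[A] (Fin q → A)) (Y : (Fin q → A) →ₗ[A] M),
      Y ∘ₗ α = X ∧ K ≤ LinearMap.ker α := by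
  classical
  obtain ⟨S, rfl⟩ := hK
  induction S using Finset.induction_on with
  | empty => exact ⟨n, LinearMap.id, X, rfl, by simp⟩
  | insert a S _ ih =>
    rw [Finset.coe_insert, Submodule.span_insert, sup_le_iff,
      Submodule.span_singleton_le_iff_mem] at hKX
    obtain ⟨q₁, α₁, Y₁, hX, hS⟩ := ih hKX.2
    obtain ⟨q, α₂, Y, hY, ha⟩ := hflat.exists_factor_of_map_eq_zero Y₁ (a := α₁ a)
      (by rw [← LinearMap.comp_apply, hX]; exact hKX.1)
    refine ⟨q, α₂ ∘ₗ α₁, Y, by rw [← LinearMap.comp_assoc, hY, hX], ?_⟩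
    rw [Finset.coe_insert, Submodule.span_insert, sup_le_iff,
      Submodule.span_singleton_le_iff_mem]
    exact ⟨ha, hS.trans (LinearMap.ker_le_ker_comp α₁ α₂)⟩

end IsFlatModule

theorem Finsupp.apply_eq_zero_of_sup_support_lt {N : Type*} [Zero N] (c : ℕ →₀ N) {i : ℕ}
    (hi : c.support.sup id < i) : c i = 0 :=
  Finsupp.notMem_support_iff.1 fun h => (Finset.le_sup (f := id) h).not_gt hi

theorem LinearMap.range_le_of_forall_single_mem {A : Type u} [Ring A] {ι : Type*} [Fintype ι]
    [DecidableEq ι] {X : Type*} [AddCommGroup X] [Module A X] (f : (ι → A) →ₗ[A] X)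
    {p : Submodule A X} (h : ∀ i, f (Pi.single i 1) ∈ p) : LinearMap.range f ≤ p := by
  rintro _ ⟨v, rfl⟩
  rw [← (Pi.basisFun A ι).sum_repr v, map_sum]
  exact Submodule.sum_mem _ fun i _ => by
    rw [map_smul, Pi.basisFun_apply]
    exact Submodule.smul_mem _ _ (h i)

noncomputable section Stages

variable {A : Type u} [Ring A] (r : ℕ → ℕ →₀ A)

/-- Large enough that the relations `r k`, `k < s`, only involve the first `stageDim r s`
generators. -/
def stageDim (s : ℕ) : ℕ :=
  s + ∑ k ∈ Finset.range s, ((r k).support.sup id + 1)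

/-- The free module on the first `stageDim r s` generators. Together with `stageRel r s` it
presents the `s`-th term of a sequence of finitely presented modules whose colimit is the
module presented by `r`. -/
abbrev Stage (s : ℕ) : Type u := Fin (stageDim r s) → A

theorem stageDim_mono : Monotone (stageDim r) := fun _ _ h =>
  add_le_add h (Finset.sum_le_sum_of_subset (Finset.range_subset_range.2 h))

theorem le_stageDim (s : ℕ) : s ≤ stageDim r s := Nat.le_add_right _ _

theorem apply_eq_zero_of_stageDim_le {k s i : ℕ} (hk : k < s) (hi : stageDim r s ≤ i) :
    r k i = 0 := by
  refine (r k).apply_eq_zero_of_sup_support_lt ?_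
  have := Finset.single_le_sum (f := fun k => (r k).support.sup id + 1)
    (fun _ _ => Nat.zero_le _) (Finset.mem_range.2 hk)
  unfold stageDim at hi
  omega

def stageIncl (s : ℕ) : Stage r s →ₗ[A] (ℕ →₀ A) :=
  Finsupp.lmapDomain A A Fin.val ∘ₗ (Finsupp.linearEquivFunOnFinite A A _).symm.toLinearMap

def stageTrunc (s : ℕ) : (ℕ →₀ A) →ₗ[A] Stage r s :=
  LinearMap.funLeft A A Fin.val ∘ₗ Finsupp.lcoeFun

def stageMap (s s' : ℕ) : Stage r s →ₗ[A] Stage r s' :=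
  stageTrunc r s' ∘ₗ stageIncl r s

def stageRel (s : ℕ) : Submodule A (Stage r s) :=
  Submodule.span A (Set.range fun k : Fin s => stageTrunc r s (r k))

variable {r}

theorem stageIncl_apply_val {s : ℕ} (v : Stage r s) (i : Fin (stageDim r s)) :
    stageIncl r s v i = v i :=
  (Finsupp.mapDomain_apply Fin.val_injective _ i).trans rfl

theorem stageIncl_apply_of_le {s : ℕ} (v : Stage r s) {i : ℕ} (hi : stageDim r s ≤ i) :
    stageIncl r s v i = 0 :=
  Finsupp.mapDomain_of_notMem_range _ _ fun ⟨j, hj⟩ => (hj ▸ j.isLt).not_ge hi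

theorem stageTrunc_stageIncl {s : ℕ} (v : Stage r s) : stageTrunc r s (stageIncl r s v) = v :=
  funext (stageIncl_apply_val v)

theorem stageIncl_stageTrunc {s : ℕ} {c : ℕ →₀ A} (hc : ∀ i, stageDim r s ≤ i → c i = 0) :
    stageIncl r s (stageTrunc r s c) = c := by
  ext i
  rcases lt_or_ge i (stageDim r s) with hi | hi
  · exact stageIncl_apply_val _ ⟨i, hi⟩
  · rw [stageIncl_apply_of_le _ hi, hc i hi]

theorem stageIncl_stageTrunc_rel {k s : ℕ} (hk : k < s) :
    stageIncl r s (stageTrunc r s (r k)) = r k :=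
  stageIncl_stageTrunc fun _ => apply_eq_zero_of_stageDim_le r hk

theorem stageIncl_stageMap {s s' : ℕ} (h : s ≤ s') (v : Stage r s) :
    stageIncl r s' (stageMap r s s' v) = stageIncl r s v :=
  stageIncl_stageTrunc fun _ hi => stageIncl_apply_of_le v ((stageDim_mono r h).trans hi)

theorem stageMap_self {s : ℕ} (v : Stage r s) : stageMap r s s v = v :=
  stageTrunc_stageIncl v

theorem stageMap_stageMap {s s' s'' : ℕ} (h : s ≤ s') (v : Stage r s) :
    stageMap r s' s'' (stageMap r s s' v) = stageMap r s s'' v :=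
  congrArg (stageTrunc r s'') (stageIncl_stageMap h v)

theorem stageRel_fg (s : ℕ) : (stageRel r s).FG :=
  Submodule.fg_span (Set.finite_range _)

theorem stageMap_mem_stageRel {s s' : ℕ} (h : s ≤ s') {v : Stage r s} (hv : v ∈ stageRel r s) :
    stageMap r s s' v ∈ stageRel r s' := by
  refine (Submodule.span_le (p := (stageRel r s').comap (stageMap r s s'))).2 ?_ hv
  rintro _ ⟨k, rfl⟩
  refine Submodule.subset_span ⟨⟨k, k.isLt.trans_le h⟩, ?_⟩
  exact (congrArg (stageTrunc r s') (stageIncl_stageTrunc_rel k.isLt)).symm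

variable {M : Type u} [AddCommGroup M] [Module A M] (Θ : (ℕ →₀ A) →ₗ[A] M)

variable (r) in
def stageCocone (s : ℕ) : Stage r s →ₗ[A] M :=
  Θ ∘ₗ stageIncl r s

theorem stageCocone_stageMap {s s' : ℕ} (h : s ≤ s') (v : Stage r s) :
    stageCocone r Θ s' (stageMap r s s' v) = stageCocone r Θ s v :=
  congrArg Θ (stageIncl_stageMap h v)

variable {Θ}

theorem stageRel_le_ker_stageCocone (hΘ : Submodule.span A (Set.range r) ≤ LinearMap.ker Θ)
    (s : ℕ) : stageRel r s ≤ LinearMap.ker (stageCocone r Θ s) := by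
  refine Submodule.span_le.2 ?_
  rintro _ ⟨k, rfl⟩
  show Θ (stageIncl r s (stageTrunc r s (r k))) = 0
  rw [stageIncl_stageTrunc_rel k.isLt]
  exact hΘ (Submodule.subset_span ⟨k, rfl⟩)

theorem eventually_stageMap_mem_stageRel (hΘ : LinearMap.ker Θ ≤ Submodule.span A (Set.range r))
    {s : ℕ} {v : Stage r s} (hv : stageCocone r Θ s v = 0) :
    ∀ᶠ N in atTop, stageMap r s N v ∈ stageRel r N := by
  obtain ⟨w, hw⟩ := Finsupp.mem_span_range_iff_exists_finsupp.1 (hΘ hv)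
  refine eventually_atTop.2 ⟨w.support.sup id + 1, fun N hN => ?_⟩
  rw [stageMap, LinearMap.comp_apply, ← hw, map_finsuppSum]
  refine Submodule.finsuppSum_mem _ _ _ _ fun k hk => ?_
  rw [map_smul]
  refine Submodule.smul_mem _ _ (Submodule.subset_span ⟨⟨k, ?_⟩, rfl⟩)
  have := Finset.le_sup (f := id) (Finsupp.mem_support_iff.2 hk)
  simp only [id] at this
  omega

theorem eventually_exists_stageCocone_eq (hΘ : Function.Surjective Θ) (m : M) :
    ∀ᶠ s in atTop, ∃ v, stageCocone r Θ s v = m := by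
  obtain ⟨c, rfl⟩ := hΘ m
  refine eventually_atTop.2 ⟨c.support.sup id + 1, fun s hs => ⟨stageTrunc r s c, ?_⟩⟩
  refine congrArg Θ (stageIncl_stageTrunc fun i hi => c.apply_eq_zero_of_sup_support_lt ?_)
  have := le_stageDim r s
  omega

theorem eventually_exists_stageCocone_comp_eq (hΘ : Function.Surjective Θ) {q : ℕ}
    (Y : (Fin q → A) →ₗ[A] M) :
    ∀ᶠ N in atTop, ∃ β : (Fin q → A) →ₗ[A] Stage r N, stageCocone r Θ N ∘ₗ β = Y := by
  classical
  filter_upwards [eventually_all.2 fun t =>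
    eventually_exists_stageCocone_eq (r := r) hΘ (Y (Pi.single t 1))] with N hN
  choose v hv using hN
  refine ⟨Fintype.linearCombination A v, (Pi.basisFun A (Fin q)).ext fun t => ?_⟩
  simp [Fintype.linearCombination_apply_single, hv]

theorem eventually_range_stageMap_comp_le_stageRel
    (hΘ : LinearMap.ker Θ ≤ Submodule.span A (Set.range r)) {n s : ℕ}
    (φ : (Fin n → A) →ₗ[A] Stage r s) (hφ : stageCocone r Θ s ∘ₗ φ = 0) :
    ∀ᶠ N in atTop, LinearMap.range (stageMap r s N ∘ₗ φ) ≤ stageRel r N := by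
  classical
  filter_upwards [eventually_all.2 fun i =>
    eventually_stageMap_mem_stageRel hΘ (LinearMap.congr_fun hφ (Pi.single i 1))] with N hN
  exact LinearMap.range_le_of_forall_single_mem _ hN

end Stages

structure StageFactor {A : Type u} [Ring A] (r : ℕ → ℕ →₀ A) (s : ℕ) where
  rank : ℕ
  next : ℕ
  lt_next : s < next
  toFree : Stage r s →ₗ[A] (Fin rank → A)
  ofFree : (Fin rank → A) →ₗ[A] Stage r next
  stageRel_le_ker : stageRel r s ≤ LinearMap.ker toFree
  ofFree_toFree_sub_mem : ∀ v, ofFree (toFree v) - stageMap r s next v ∈ stageRel r next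

namespace StageFactor

variable {A : Type u} [Ring A] {r : ℕ → ℕ →₀ A}
  {M : Type u} [AddCommGroup M] [Module A M] {Θ : (ℕ →₀ A) →ₗ[A] M}

theorem stageCocone_ofFree_toFree {s : ℕ} (Φ : StageFactor r s)
    (hΘ : Submodule.span A (Set.range r) ≤ LinearMap.ker Θ) (v : Stage r s) :
    stageCocone r Θ Φ.next (Φ.ofFree (Φ.toFree v)) = stageCocone r Θ s v := by
  rw [← stageCocone_stageMap Θ Φ.lt_next.le v, ← sub_eq_zero, ← map_sub]
  exact stageRel_le_ker_stageCocone hΘ _ (Φ.ofFree_toFree_sub_mem v)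

theorem nonempty (hflat : IsFlatModule A M)
    (hΘr : Submodule.span A (Set.range r) ≤ LinearMap.ker Θ)
    (hΘk : LinearMap.ker Θ ≤ Submodule.span A (Set.range r))
    (hΘ : Function.Surjective Θ) (s : ℕ) : Nonempty (StageFactor r s) := by
  obtain ⟨q, α, Y, hYα, hα⟩ := hflat.exists_factor_of_fg (stageCocone r Θ s) (stageRel_fg s)
    (stageRel_le_ker_stageCocone hΘr s)
  obtain ⟨N₁, ⟨β₁, hβ₁⟩, hsN₁⟩ :=
    ((eventually_exists_stageCocone_comp_eq hΘ Y).and (eventually_ge_atTop s)).exists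
  -- the defect of the round trip through the free module dies at a later stage
  let δ := β₁ ∘ₗ α - stageMap r s N₁
  have hδ : stageCocone r Θ N₁ ∘ₗ δ = 0 := by
    ext v
    simp [δ, ← LinearMap.comp_apply (stageCocone r Θ N₁) β₁, hβ₁, ← hYα,
      stageCocone_stageMap Θ hsN₁]
  obtain ⟨N, hN, hN₁N, hsN⟩ := ((eventually_range_stageMap_comp_le_stageRel hΘk δ hδ).and
    ((eventually_ge_atTop N₁).and (eventually_gt_atTop s))).exists
  refine ⟨⟨q, N, hsN, α, stageMap r N₁ N ∘ₗ β₁, hα, fun v => ?_⟩⟩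
  simpa [δ, stageMap_stageMap hsN₁] using hN ⟨v, rfl⟩

end StageFactor

section Chain

variable {A : Type u} [Ring A] {P : ℕ → Type*} [∀ j, AddCommGroup (P j)] [∀ j, Module A (P j)]
  (t : ∀ j, P j →ₗ[A] P (j + 1))

def chainMap {j k : ℕ} (h : j ≤ k) : P j →ₗ[A] P k :=
  Nat.leRecOn h (fun g => t _ ∘ₗ g) LinearMap.id

theorem chainMap_self (j : ℕ) (h : j ≤ j) : chainMap t h = LinearMap.id :=
  Nat.leRecOn_self _

theorem chainMap_succ {j k : ℕ} (h : j ≤ k) (h' : j ≤ k + 1) :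
    chainMap t h' = t k ∘ₗ chainMap t h :=
  Nat.leRecOn_succ h _

theorem chainMap_comp {j k l : ℕ} (h : j ≤ k) (h' : k ≤ l) :
    chainMap t h' ∘ₗ chainMap t h = chainMap t (h.trans h') := by
  induction l, h' using Nat.le_induction with
  | base => rw [chainMap_self, LinearMap.id_comp]
  | succ l hkl ih => rw [chainMap_succ t hkl, LinearMap.comp_assoc, ih, ← chainMap_succ]

variable {M : Type*} [AddCommGroup M] [Module A M] (μ : ∀ j, P j →ₗ[A] M)

theorem apply_chainMap (hμ : ∀ j, μ (j + 1) ∘ₗ t j = μ j) {j k : ℕ} (h : j ≤ k) (v : P j) :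
    μ k (chainMap t h v) = μ j v := by
  induction k, h using Nat.le_induction with
  | base => rw [chainMap_self]; rfl
  | succ k hjk ih => rw [chainMap_succ t hjk, ← ih, ← hμ k]; rfl

theorem bijective_directLimit_lift_chainMap (hμ : ∀ j, μ (j + 1) ∘ₗ t j = μ j)
    (hsurj : ∀ m, ∃ j v, μ j v = m)
    (hker : ∀ j v, μ j v = 0 → ∃ k, ∃ h : j ≤ k, chainMap t h v = 0) :
    Function.Bijective (Module.DirectLimit.lift A ℕ P (fun _ _ h => chainMap t h) μ
      fun _ _ h v => apply_chainMap t μ hμ h v) := by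
  refine ⟨(injective_iff_map_eq_zero _).2 fun z hz => ?_, fun m => ?_⟩
  · obtain ⟨j, v, rfl⟩ := Module.DirectLimit.exists_of z
    rw [Module.DirectLimit.lift_of] at hz
    obtain ⟨k, h, hv⟩ := hker j v hz
    rw [← Module.DirectLimit.of_f (hij := h), hv, map_zero]
  · obtain ⟨j, v, rfl⟩ := hsurj m
    exact ⟨_, Module.DirectLimit.lift_of _ _ v⟩

end Chain

noncomputable section StageChain

variable {A : Type u} [Ring A] {r : ℕ → ℕ →₀ A} (Φ : ∀ s, StageFactor r s)

def stageIdx : ℕ → ℕ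
  | 0 => 0
  | j + 1 => (Φ (stageIdx j)).next

abbrev chainModule (j : ℕ) : Type u := Fin (Φ (stageIdx Φ j)).rank → A

def chainStep (j : ℕ) : chainModule Φ j →ₗ[A] chainModule Φ (j + 1) :=
  (Φ (stageIdx Φ (j + 1))).toFree ∘ₗ (Φ (stageIdx Φ j)).ofFree

variable {M : Type u} [AddCommGroup M] [Module A M] (Θ : (ℕ →₀ A) →ₗ[A] M)

def chainCocone (j : ℕ) : chainModule Φ j →ₗ[A] M :=
  stageCocone r Θ (stageIdx Φ (j + 1)) ∘ₗ (Φ (stageIdx Φ j)).ofFree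

theorem stageIdx_strictMono : StrictMono (stageIdx Φ) :=
  strictMono_nat_of_lt_succ fun j => (Φ (stageIdx Φ j)).lt_next

variable {Φ Θ}

theorem chainCocone_succ_comp_chainStep (hΘ : Submodule.span A (Set.range r) ≤ LinearMap.ker Θ)
    (j : ℕ) : chainCocone Φ Θ (j + 1) ∘ₗ chainStep Φ j = chainCocone Φ Θ j :=
  LinearMap.ext fun _ => (Φ (stageIdx Φ (j + 1))).stageCocone_ofFree_toFree hΘ _

theorem exists_chainCocone_eq (hΘr : Submodule.span A (Set.range r) ≤ LinearMap.ker Θ)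
    (hΘ : Function.Surjective Θ) (m : M) : ∃ j v, chainCocone Φ Θ j v = m := by
  obtain ⟨j, w, hw⟩ := ((stageIdx_strictMono Φ).tendsto_atTop.eventually
    (eventually_exists_stageCocone_eq hΘ m)).exists
  exact ⟨j, (Φ (stageIdx Φ j)).toFree w, ((Φ _).stageCocone_ofFree_toFree hΘr w).trans hw⟩

theorem ofFree_chainMap_sub_mem {j k : ℕ} (h : j ≤ k) (v : chainModule Φ j) :
    (Φ (stageIdx Φ k)).ofFree (chainMap (chainStep Φ) h v) -
        stageMap r (Φ (stageIdx Φ j)).next (Φ (stageIdx Φ k)).next ((Φ (stageIdx Φ j)).ofFree v) ∈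
      stageRel r (Φ (stageIdx Φ k)).next := by
  induction k, h using Nat.le_induction with
  | base => rw [chainMap_self, LinearMap.id_apply, stageMap_self, sub_self]; exact zero_mem _
  | succ k hjk ih =>
    have hround := (Φ (stageIdx Φ (k + 1))).ofFree_toFree_sub_mem
      ((Φ (stageIdx Φ k)).ofFree (chainMap (chainStep Φ) hjk v))
    have hih := stageMap_mem_stageRel (s := (Φ (stageIdx Φ k)).next)
      (Φ (stageIdx Φ (k + 1))).lt_next.le ih
    have hjk' : (Φ (stageIdx Φ j)).next ≤ (Φ (stageIdx Φ k)).next :=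
      (stageIdx_strictMono Φ).monotone (Nat.succ_le_succ hjk)
    rw [map_sub, stageMap_stageMap hjk'] at hih
    rw [chainMap_succ _ hjk]
    convert add_mem hround hih using 1
    exact (sub_add_sub_cancel _ _ _).symm

theorem exists_chainMap_eq_zero (hΘ : LinearMap.ker Θ ≤ Submodule.span A (Set.range r))
    {j : ℕ} {v : chainModule Φ j} (hv : chainCocone Φ Θ j v = 0) :
    ∃ k, ∃ h : j ≤ k, chainMap (chainStep Φ) h v = 0 := by
  obtain ⟨k, hk, hjk⟩ := ((((stageIdx_strictMono Φ).tendsto_atTop.comp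
    (tendsto_add_atTop_nat 1)).eventually
      (eventually_stageMap_mem_stageRel (v := (Φ (stageIdx Φ j)).ofFree v) hΘ hv)).and
    (eventually_ge_atTop j)).exists
  refine ⟨k + 1, hjk.trans k.le_succ, ?_⟩
  rw [chainMap_succ _ hjk]
  exact (Φ (stageIdx Φ (k + 1))).stageRel_le_ker
    ((Submodule.sub_mem_iff_left _ hk).1 (ofFree_chainMap_sub_mem hjk v))

end StageChain

theorem CountablyPresentable.exists_surjective_ker_eq_span {A : Type u} [Ring A]
    {M : Type u} [AddCommGroup M] [Module A M] (h : CountablyPresentable A M) :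
    ∃ (r : ℕ → ℕ →₀ A) (Θ : (ℕ →₀ A) →ₗ[A] M),
      Function.Surjective Θ ∧ LinearMap.ker Θ = Submodule.span A (Set.range r) := by
  obtain ⟨f, ⟨e⟩⟩ := h
  refine ⟨fun k => f (Finsupp.single k 1), e.toLinearMap ∘ₗ (LinearMap.range f).mkQ,
    e.surjective.comp (Submodule.mkQ_surjective _), ?_⟩
  rw [LinearMap.ker_comp, LinearEquiv.ker, Submodule.comap_bot, Submodule.ker_mkQ,
    LinearMap.range_eq_map, ← Finsupp.basisSingleOne.span_eq, Submodule.map_span,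
    ← Set.range_comp, Finsupp.coe_basisSingleOne]
  rfl

/-- **Countable Govorov–Lazard theorem.**  Every countably presentable flat module over an
associative ring `A` is the colimit of a countable directed chain of finitely generated
free `A`-modules. -/
theorem countably_presentable_flat_is_countable_directed_colimit_of_fg_free
    (A : Type u) [Ring A] (M : Type u) [AddCommGroup M] [Module A M]
    (hflat : IsFlatModule A M) (hcp : CountablyPresentable A M) :
    ∃ (P : ℕ → ModuleCat.{u} A)
      (f : ∀ n m : ℕ, n ≤ m → P n →ₗ[A] P m),
      (∀ n, Module.Free A (P n)) ∧ (∀ n, Module.Finite A (P n)) ∧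
      (∀ (n : ℕ) (h : n ≤ n), f n n h = LinearMap.id) ∧
      (∀ (n m k : ℕ) (hnm : n ≤ m) (hmk : m ≤ k),
        (f m k hmk).comp (f n m hnm) = f n k (hnm.trans hmk)) ∧
      Nonempty (Module.DirectLimit (fun n => P n) f ≃ₗ[A] M) := by
  obtain ⟨r, Θ, hΘ, hker⟩ := hcp.exists_surjective_ker_eq_span
  let Φ : ∀ s, StageFactor r s := fun s =>
    (StageFactor.nonempty hflat hker.ge hker.le hΘ s).some
  have hbij := bijective_directLimit_lift_chainMap (chainStep Φ) (chainCocone Φ Θ)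
    (chainCocone_succ_comp_chainStep hker.ge) (exists_chainCocone_eq hker.ge hΘ)
    fun _ _ => exists_chainMap_eq_zero hker.le
  exact ⟨fun j => ModuleCat.of A (chainModule Φ j), fun _ _ h => chainMap (chainStep Φ) h,
    fun _ => inferInstanceAs (Module.Free A (Fin _ → A)),
    fun _ => inferInstanceAs (Module.Finite A (Fin _ → A)),
    chainMap_self _, fun _ _ _ => chainMap_comp _, ⟨LinearEquiv.ofBijective _ hbij⟩⟩
end

section
/- Let E be an additive category with directed colimits. Then any bounded cochain complex whose terms are finitely presentable objects of E is a finitely presentable object of the category of unbounded cochain complexes in E. -/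
open CategoryTheory CategoryTheory.Limits

universe v u

/-- An object `X` of a category is finitely presentable if `Hom(X, -)` preserves
colimits of diagrams indexed by (nonempty) directed posets. -/
def IsFinitelyPresentableObj {C : Type u} [Category.{v} C] (X : C) : Prop :=
  ∀ (I : Type v) [Preorder I] [IsDirected I (· ≤ ·)] [Nonempty I],
    Nonempty (PreservesColimitsOfShape I (coyoneda.obj (Opposite.op X)))

/-- In an additive category `E` with directed colimits, any bounded cochain complex of
finitely presentable objects of `E` is a finitely presentable object of the category of
unbounded cochain complexes in `E`. -/
theorem bounded_complex_of_finitely_presentable_is_finitely_presentable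
    (E : Type u) [Category.{v} E] [Preadditive E]
    (hE : ∀ (I : Type v) [Preorder I] [IsDirected I (· ≤ ·)] [Nonempty I],
      HasColimitsOfShape I E)
    (K : CochainComplex E ℤ)
    (hbounded : ∃ a b : ℤ, ∀ n : ℤ, (n < a ∨ b < n) → IsZero (K.X n))
    (hfp : ∀ n : ℤ, IsFinitelyPresentableObj (K.X n)) :
    IsFinitelyPresentableObj (K : CochainComplex E ℤ) := by
  classical
  intro I _ _ _
  letI : HasColimitsOfShape I E := hE I
  obtain ⟨a, b, hK⟩ := hbounded
  refine ⟨⟨fun {D} => ?_⟩⟩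
  apply preservesColimit_of_preserves_colimit_cocone (colimit.isColimit D)
  -- per-degree colimits in `E`
  have hev : ∀ m : ℤ,
      IsColimit ((HomologicalComplex.eval E (ComplexShape.up ℤ) m).mapCocone
        (colimit.cocone D)) := fun m => isColimitOfPreserves _ (colimit.isColimit D)
  have hfpc : ∀ n m : ℤ, IsColimit ((coyoneda.obj (Opposite.op (K.X n))).mapCocone
      ((HomologicalComplex.eval E (ComplexShape.up ℤ) m).mapCocone (colimit.cocone D))) := by
    intro n m
    letI := (hfp n I).some
    exact isColimitOfPreserves _ (hev m)
  -- joint surjectivity, per degree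
  have surj : ∀ (n m : ℤ) (x : K.X n ⟶ (colimit D).X m),
      ∃ (i : I) (g : K.X n ⟶ (D.obj i).X m), g ≫ (colimit.ι D i).f m = x := by
    intro n m x
    obtain ⟨i, y, hy⟩ := Types.jointly_surjective _ (hfpc n m) x
    exact ⟨i, y, hy⟩
  -- eventual equality, per degree
  have key : ∀ (n m : ℤ) (i j : I) (xi : K.X n ⟶ (D.obj i).X m) (xj : K.X n ⟶ (D.obj j).X m),
      xi ≫ (colimit.ι D i).f m = xj ≫ (colimit.ι D j).f m →
      ∃ (k : I) (hik : i ≤ k) (hjk : j ≤ k),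
        xi ≫ (D.map (homOfLE hik)).f m = xj ≫ (D.map (homOfLE hjk)).f m := by
    intro n m i j xi xj h
    obtain ⟨k, f, g, hk⟩ := (Types.FilteredColimit.isColimit_eq_iff _ (hfpc n m)).mp h
    exact ⟨k, f.le, g.le, hk⟩
  apply Types.FilteredColimit.isColimitOf
  · -- joint surjectivity for chain maps
    intro x
    let x' : K ⟶ colimit D := x
    choose u g hg using fun n => surj n n (x'.f n)
    obtain ⟨i₀, hi₀⟩ := Finset.exists_le ((Finset.Icc a b).image u)
    have hub : ∀ n ∈ Finset.Icc a b, u n ≤ i₀ := fun n hn =>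
      hi₀ _ (Finset.mem_image_of_mem u hn)
    let g' : ∀ n : ℤ, K.X n ⟶ (D.obj i₀).X n := fun n =>
      if h : n ∈ Finset.Icc a b then g n ≫ (D.map (homOfLE (hub n h))).f n else 0
    have g'pos : ∀ n (h : n ∈ Finset.Icc a b),
        g' n = g n ≫ (D.map (homOfLE (hub n h))).f n := fun n h => dif_pos h
    have g'neg : ∀ n, n ∉ Finset.Icc a b → g' n = 0 := fun n h => dif_neg h
    have hg' : ∀ n, g' n ≫ (colimit.ι D i₀).f n = x'.f n := by
      intro n
      by_cases h : n ∈ Finset.Icc a b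
      · rw [g'pos n h, Category.assoc, ← HomologicalComplex.comp_f,
          colimit.w D (homOfLE (hub n h))]
        exact hg n
      · have hz : IsZero (K.X n) := hK n (by rw [Finset.mem_Icc] at h; omega)
        rw [g'neg n h, zero_comp]
        exact (hz.eq_zero_of_src (x'.f n)).symm
    have claim : ∀ n : ℤ, ∃ (k : I) (hk : i₀ ≤ k),
        (g' n ≫ (D.obj i₀).d n (n + 1)) ≫ (D.map (homOfLE hk)).f (n + 1) =
          (K.d n (n + 1) ≫ g' (n + 1)) ≫ (D.map (homOfLE hk)).f (n + 1) := by
      intro n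
      by_cases h : n ∈ Finset.Icc a b
      · have heq : (g' n ≫ (D.obj i₀).d n (n + 1)) ≫ (colimit.ι D i₀).f (n + 1) =
            (K.d n (n + 1) ≫ g' (n + 1)) ≫ (colimit.ι D i₀).f (n + 1) := by
          rw [Category.assoc, Category.assoc, hg' (n + 1),
            ← (colimit.ι D i₀).comm n (n + 1), ← Category.assoc, hg' n]
          exact x'.comm n (n + 1)
        obtain ⟨k, hik, hjk, hkeq⟩ := key n (n + 1) i₀ i₀ _ _ heq
        exact ⟨k, hik, hkeq⟩
      · have hz : IsZero (K.X n) := hK n (by rw [Finset.mem_Icc] at h; omega)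
        exact ⟨i₀, le_refl _, hz.eq_of_src _ _⟩
    choose v hv hveq using claim
    obtain ⟨k, hk⟩ := Finset.exists_le (insert i₀ ((Finset.Icc a b).image v))
    have hik : i₀ ≤ k := hk _ (Finset.mem_insert_self _ _)
    have hvk : ∀ n ∈ Finset.Icc a b, v n ≤ k := fun n hn =>
      hk _ (Finset.mem_insert_of_mem (Finset.mem_image_of_mem v hn))
    refine ⟨k, { f := fun n => g' n ≫ (D.map (homOfLE hik)).f n, comm' := ?_ }, ?_⟩
    · intro n m hnm
      obtain rfl : n + 1 = m := hnm
      by_cases h : n ∈ Finset.Icc a b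
      · have h1 : v n ≤ k := hvk n h
        have e2 : D.map (homOfLE hik) =
            D.map (homOfLE (hv n)) ≫ D.map (homOfLE h1) := by
          rw [← D.map_comp, homOfLE_comp]
        have h4 := congrArg (fun t => t ≫ (D.map (homOfLE h1)).f (n + 1)) (hveq n)
        calc (g' n ≫ (D.map (homOfLE hik)).f n) ≫ (D.obj k).d n (n + 1)
            = (g' n ≫ (D.obj i₀).d n (n + 1)) ≫ (D.map (homOfLE hik)).f (n + 1) := by
              rw [Category.assoc, (D.map (homOfLE hik)).comm n (n + 1), ← Category.assoc]
          _ = ((g' n ≫ (D.obj i₀).d n (n + 1)) ≫ (D.map (homOfLE (hv n))).f (n + 1)) ≫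
                (D.map (homOfLE h1)).f (n + 1) := by
              rw [e2, HomologicalComplex.comp_f, ← Category.assoc]
          _ = ((K.d n (n + 1) ≫ g' (n + 1)) ≫ (D.map (homOfLE (hv n))).f (n + 1)) ≫
                (D.map (homOfLE h1)).f (n + 1) := h4
          _ = K.d n (n + 1) ≫ g' (n + 1) ≫ (D.map (homOfLE hik)).f (n + 1) := by
              rw [e2, HomologicalComplex.comp_f, ← Category.assoc, ← Category.assoc]
      · have hz : IsZero (K.X n) := hK n (by rw [Finset.mem_Icc] at h; omega)
        exact hz.eq_of_src _ _
    · show x' = _ ≫ colimit.ι D k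
      ext n
      show x'.f n = (g' n ≫ (D.map (homOfLE hik)).f n) ≫ (colimit.ι D k).f n
      rw [Category.assoc, ← HomologicalComplex.comp_f, colimit.w D (homOfLE hik), hg' n]
  · -- eventual equality for chain maps
    intro i j xi xj hx
    let fi : K ⟶ D.obj i := xi
    let fj : K ⟶ D.obj j := xj
    have hx' : fi ≫ colimit.ι D i = fj ≫ colimit.ι D j := hx
    have claim : ∀ n : ℤ, ∃ (k : I) (hik : i ≤ k) (hjk : j ≤ k),
        fi.f n ≫ (D.map (homOfLE hik)).f n = fj.f n ≫ (D.map (homOfLE hjk)).f n := by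
      intro n
      have h0 := congrArg (fun φ : K ⟶ colimit D => φ.f n) hx'
      simp only [HomologicalComplex.comp_f] at h0
      exact key n n i j _ _ h0
    choose v hvi hvj hveq using claim
    obtain ⟨k₀, hk₀i, hk₀j⟩ := directed_of (· ≤ ·) i j
    obtain ⟨k, hk⟩ := Finset.exists_le (insert k₀ ((Finset.Icc a b).image v))
    have hik : i ≤ k := le_trans hk₀i (hk _ (Finset.mem_insert_self _ _))
    have hjk : j ≤ k := le_trans hk₀j (hk _ (Finset.mem_insert_self _ _))
    refine ⟨k, homOfLE hik, homOfLE hjk, ?_⟩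
    show fi ≫ D.map (homOfLE hik) = fj ≫ D.map (homOfLE hjk)
    ext n
    by_cases h : n ∈ Finset.Icc a b
    · have h1 : v n ≤ k := hk _ (Finset.mem_insert_of_mem (Finset.mem_image_of_mem v h))
      have e2 : D.map (homOfLE hik) = D.map (homOfLE (hvi n)) ≫ D.map (homOfLE h1) := by
        rw [← D.map_comp, homOfLE_comp]
      have e3 : D.map (homOfLE hjk) = D.map (homOfLE (hvj n)) ≫ D.map (homOfLE h1) := by
        rw [← D.map_comp, homOfLE_comp]
      rw [HomologicalComplex.comp_f, HomologicalComplex.comp_f, e2, e3,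
        HomologicalComplex.comp_f, HomologicalComplex.comp_f, ← Category.assoc,
        ← Category.assoc, hveq n]
    · have hz : IsZero (K.X n) := hK n (by rw [Finset.mem_Icc] at h; omega)
      exact hz.eq_of_src _ _
end

section
/- Let E be an additive category with ℵ₁-directed colimits. Then any (unbounded) cochain complex whose terms are ℵ₁-presentable objects of E is an ℵ₁-presentable object of the category of cochain complexes in E. -/
open CategoryTheory CategoryTheory.Limits

universe v u

/-- A poset is `ℵ₁`-directed if every countable subset has an upper bound. -/
def IsAleph1Directed (I : Type*) [Preorder I] : Prop :=
  ∀ S : Set I, S.Countable → ∃ j : I, ∀ i ∈ S, i ≤ j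

/-- An object `X` of a category is `ℵ₁`-presentable (countably presentable) if
`Hom(X, -)` preserves colimits of diagrams indexed by `ℵ₁`-directed posets. -/
def IsAleph1PresentableObj {C : Type u} [Category.{v} C] (X : C) : Prop :=
  ∀ (I : Type v) [Preorder I], IsAleph1Directed I →
    Nonempty (PreservesColimitsOfShape I (coyoneda.obj (Opposite.op X)))

/-!
Since colimits of complexes are computed degreewise, a chain map `K ⟶ colim L` is a family of
maps `K.X n ⟶ colim (L.X n)`, each of which factors through some stage of the diagram because
`K.X n` is `ℵ₁`-presentable. As there are only countably many degrees, one stage works for all of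
them; the countably many commutation squares with the differentials hold in the colimit, hence
at a later common stage. Uniqueness of factorizations is proved the same way.
-/

open Opposite

namespace IsAleph1Directed

variable {I : Type*} [Preorder I]

lemma exists_forall_le (hI : IsAleph1Directed I) {ι : Type*} [Countable ι] (f : ι → I) :
    ∃ j, ∀ n, f n ≤ j := by
  obtain ⟨j, hj⟩ := hI (Set.range f) (Set.countable_range f)
  exact ⟨j, fun n => hj _ ⟨n, rfl⟩⟩

lemma isFiltered (hI : IsAleph1Directed I) : IsFiltered I :=
  have : Nonempty I := ⟨(hI ∅ Set.countable_empty).choose⟩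
  have : IsDirected I (· ≤ ·) := ⟨fun a b => by
    obtain ⟨j, hj⟩ := hI.exists_forall_le (fun t : Bool => bif t then a else b)
    exact ⟨j, hj true, hj false⟩⟩
  inferInstance

variable {C : Type*} [Category C] {ι : Type*} [Countable ι]
  {D : ι → I ⥤ C} {c : ∀ n, Cocone (D n)} {X : ι → C}

lemma exists_common_factorization (hI : IsAleph1Directed I) (hc : ∀ n, IsColimit (c n))
    [∀ n, PreservesColimit (D n) (coyoneda.obj (op (X n)))] (f : ∀ n, X n ⟶ (c n).pt) :
    ∃ (j : I) (g : ∀ n, X n ⟶ (D n).obj j), ∀ n, g n ≫ (c n).ι.app j = f n := by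
  choose i g hg using fun n => exists_hom_of_preservesColimit_coyoneda (hc n) (f n)
  obtain ⟨j, hj⟩ := hI.exists_forall_le i
  exact ⟨j, fun n => g n ≫ (D n).map (homOfLE (hj n)),
    fun n => by rw [Category.assoc, (c n).w, hg]⟩

lemma exists_common_eq (hI : IsAleph1Directed I) (hc : ∀ n, IsColimit (c n))
    [∀ n, PreservesColimit (D n) (coyoneda.obj (op (X n)))] {j : I} (f g : ∀ n, X n ⟶ (D n).obj j)
    (h : ∀ n, f n ≫ (c n).ι.app j = g n ≫ (c n).ι.app j) :
    ∃ (k : I) (u : j ⟶ k), ∀ n, f n ≫ (D n).map u = g n ≫ (D n).map u := by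
  have := hI.isFiltered
  choose k u hu using fun n => exists_eq_of_preservesColimit_coyoneda_self (hc n) (f n) (g n) (h n)
  obtain ⟨m, hm⟩ := hI.exists_forall_le (fun o : Option ι => o.elim j k)
  have hjm : j ≤ m := hm none
  refine ⟨m, homOfLE hjm, fun n => ?_⟩
  have hsplit : homOfLE hjm = u n ≫ homOfLE (hm (some n)) := Subsingleton.elim _ _
  rw [hsplit, Functor.map_comp, reassoc_of% hu n]

end IsAleph1Directed

namespace HomologicalComplex

section

variable {E : Type*} [Category E] [HasZeroMorphisms E] {ι : Type} [Countable ι]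
  {s : ComplexShape ι} {I : Type*} [Preorder I] {L : I ⥤ HomologicalComplex E s} {c : Cocone L}
  {K : HomologicalComplex E s}

lemma exists_hom_comp_eq_of_isAleph1Directed (hI : IsAleph1Directed I)
    (hc : ∀ n, IsColimit ((eval E s n).mapCocone c))
    [∀ n m, PreservesColimit (L ⋙ eval E s m) (coyoneda.obj (op (K.X n)))] (f : K ⟶ c.pt) :
    ∃ (j : I) (g : K ⟶ L.obj j), g ≫ c.ι.app j = f := by
  obtain ⟨j, g, hg⟩ : ∃ (j : I) (g : ∀ n, K.X n ⟶ (L.obj j).X n),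
      ∀ n, g n ≫ (c.ι.app j).f n = f.f n :=
    hI.exists_common_factorization (D := fun n => L ⋙ eval E s n) hc (fun n => f.f n)
  have hsq (p q : ι) :
      (g p ≫ (L.obj j).d p q) ≫ (c.ι.app j).f q = (K.d p q ≫ g q) ≫ (c.ι.app j).f q := by
    rw [Category.assoc, Category.assoc, hg, ← f.comm, ← hg, Category.assoc]
    exact congr_arg _ ((c.ι.app j).comm p q).symm
  obtain ⟨k, u, hu⟩ : ∃ (k : I) (u : j ⟶ k), ∀ pq : {pq : ι × ι // s.Rel pq.1 pq.2},
      (g pq.1.1 ≫ (L.obj j).d pq.1.1 pq.1.2) ≫ (L.map u).f pq.1.2 =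
        (K.d pq.1.1 pq.1.2 ≫ g pq.1.2) ≫ (L.map u).f pq.1.2 :=
    hI.exists_common_eq (ι := {pq : ι × ι // s.Rel pq.1 pq.2})
      (D := fun pq => L ⋙ eval E s pq.1.2) (fun pq => hc pq.1.2)
      (fun pq => g pq.1.1 ≫ (L.obj j).d pq.1.1 pq.1.2) (fun pq => K.d pq.1.1 pq.1.2 ≫ g pq.1.2)
      (fun pq => hsq pq.1.1 pq.1.2)
  refine ⟨k, ⟨fun n => g n ≫ (L.map u).f n, fun p q hpq => ?_⟩, ?_⟩
  · simpa only [Category.assoc, Hom.comm] using hu ⟨(p, q), hpq⟩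
  · ext n
    rw [comp_f, Category.assoc, ← comp_f, c.w u, hg]

lemma exists_comp_map_eq_of_isAleph1Directed (hI : IsAleph1Directed I)
    (hc : ∀ n, IsColimit ((eval E s n).mapCocone c))
    [∀ n, PreservesColimit (L ⋙ eval E s n) (coyoneda.obj (op (K.X n)))] {j : I}
    (g h : K ⟶ L.obj j) (H : g ≫ c.ι.app j = h ≫ c.ι.app j) :
    ∃ (k : I) (u : j ⟶ k), g ≫ L.map u = h ≫ L.map u := by
  obtain ⟨k, u, hu⟩ := hI.exists_common_eq (D := fun n => L ⋙ eval E s n) hc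
    (fun n => g.f n) (fun n => h.f n) (fun n => congr_arg (fun φ => φ.f n) H)
  exact ⟨k, u, by ext n; exact hu n⟩

end

lemma isAleph1PresentableObj {E : Type u} [Category.{v} E] [HasZeroMorphisms E]
    {ι : Type} [Countable ι] {s : ComplexShape ι} (hE : ∀ (I : Type v) [Preorder I], IsAleph1Directed I →
      HasColimitsOfShape I E)
    (K : HomologicalComplex E s) (hK : ∀ n, IsAleph1PresentableObj (K.X n)) :
    IsAleph1PresentableObj K := by
  intro I _ hI
  have := hE I hI
  have := fun n => (hK n I hI).some
  refine ⟨⟨fun {L} => preservesColimit_of_preserves_colimit_cocone (colimit.isColimit L) ?_⟩⟩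
  have hc (n : ι) := isColimitOfPreserves (eval E s n) (colimit.isColimit L)
  have := hI.isFiltered
  exact Types.FilteredColimit.isColimitOf' _ _
    (fun f => (exists_hom_comp_eq_of_isAleph1Directed hI hc f).imp fun _ ⟨g, hg⟩ => ⟨g, hg.symm⟩)
    (fun _ g h H => exists_comp_map_eq_of_isAleph1Directed hI hc g h H)

end HomologicalComplex

/-- In an additive category `E` with `ℵ₁`-directed colimits, any (unbounded) cochain
complex of `ℵ₁`-presentable objects of `E` is an `ℵ₁`-presentable object of the category
of cochain complexes in `E`. -/
theorem complex_of_countably_presentable_is_countably_presentable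
    (E : Type u) [Category.{v} E] [Preadditive E]
    (hE : ∀ (I : Type v) [Preorder I], IsAleph1Directed I → HasColimitsOfShape I E)
    (K : CochainComplex E ℤ)
    (hfp : ∀ n : ℤ, IsAleph1PresentableObj (K.X n)) :
    IsAleph1PresentableObj (K : CochainComplex E ℤ) :=
  HomologicalComplex.isAleph1PresentableObj hE K hfp
end

section
/- Let C be an abelian category with countable products that are exact, and let B ⊆ C be a class of objects closed under countable products and direct summands such that every object of C is a quotient of an object F with Ext^n_C(F, B) = 0 for all B ∈ B and n ≥ 1. Assume that every B-periodic object of C belongs to B. Then for any acyclic complex B^• in C with all terms in B, all the objects of cocycles of B^• belong to B. -/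
open CategoryTheory CategoryTheory.Limits

universe w v u

/-!
Acyclicity makes each `0 → Zⁱ → Kⁱ → Zⁱ⁺¹ → 0` short exact. As products are exact, the product
of these sequences over all degrees is short exact, and reindexing its third term by the shift
`i ↦ i + 1` exhibits `∏ Zⁱ` as `𝓑`-periodic. Hence `∏ Zⁱ ∈ 𝓑`, and so is its direct summand `Zⁿ`.
-/

namespace CategoryTheory

variable {C : Type*} [Category C] [Abelian C]

def IsPeriodic (𝓑 : C → Prop) (M : C) : Prop :=
  ∃ (B : C) (f : M ⟶ B) (g : B ⟶ M) (w : f ≫ g = 0), (ShortComplex.mk f g w).ShortExact ∧ 𝓑 B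

namespace ShortComplex

lemma shortExact_pi {ι : Type*} [HasProductsOfShape ι C] (S : ι → ShortComplex C)
    (hS : ∀ i, (S i).ShortExact) [Epi (Limits.Pi.map fun i => (S i).g)] :
    (ShortComplex.mk (Limits.Pi.map fun i => (S i).f) (Limits.Pi.map fun i => (S i).g)
      (by ext; simp)).ShortExact := by
  have := fun i => (hS i).mono_f
  refine .mk' (exact_of_f_is_kernel _ (KernelFork.IsLimit.ofι' _ _ fun u hu => ?_)) inferInstance
    inferInstance
  have hu' : ∀ i, (u ≫ Pi.π _ i) ≫ (S i).g = 0 := fun i => by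
    simpa using hu =≫ Pi.π _ i
  exact ⟨Pi.lift fun i => (hS i).exact.lift _ (hu' i), by ext; simp⟩

end ShortComplex

lemma isPeriodic_pi {ι : Type*} [HasProductsOfShape ι C] (𝓑 : C → Prop) (σ : ι ≃ ι)
    {Z B : ι → C} {f : ∀ i, Z i ⟶ B i} {g : ∀ i, B i ⟶ Z (σ i)} {w : ∀ i, f i ≫ g i = 0}
    (hfg : ∀ i, (ShortComplex.mk (f i) (g i) (w i)).ShortExact) [Epi (Limits.Pi.map g)]
    (hB : 𝓑 (∏ᶜ B)) : IsPeriodic 𝓑 (∏ᶜ Z) := by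
  have hpi := ShortComplex.shortExact_pi _ hfg
  have hzero : Limits.Pi.map f ≫ Limits.Pi.map g = 0 := by ext; simp [w]
  let shift : ∏ᶜ (fun i => Z (σ i)) ≅ ∏ᶜ Z := Pi.whiskerEquiv σ fun i => Iso.refl _
  refine ⟨∏ᶜ B, Limits.Pi.map f, Limits.Pi.map g ≫ shift.hom, by simp [reassoc_of% hzero],
    ShortComplex.shortExact_of_iso ?_ hpi, hB⟩
  exact ShortComplex.isoMk (Iso.refl _) (Iso.refl _) shift (by simp) (by simp)

namespace HomologicalComplex

lemma shortExact_kernel_ι_kernel_lift {ι : Type*} {c : ComplexShape ι} (K : HomologicalComplex C c)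
    {i j k : ι} (hij : c.Rel i j) (hjk : c.Rel j k) (hj : K.ExactAt j) :
    (ShortComplex.mk (kernel.ι (K.d i j)) (kernel.lift (K.d j k) (K.d i j) (K.d_comp_d i j k))
      (by simp [← cancel_mono (kernel.ι (K.d j k))])).ShortExact := by
  have hexact : (K.sc' i j k).Exact := (K.exactAt_iff' i j k (c.prev_eq' hij) (c.next_eq' hjk)).1 hj
  refine .mk' (ShortComplex.exact_of_f_is_kernel _ ?_) inferInstance hexact.epi_kernelLift
  exact isKernelOfComp _ (K.d i j) (kernelIsKernel _) _ (kernel.lift_ι _ _ _)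

end HomologicalComplex

end CategoryTheory

theorem cocycles_in_class_of_periodicity_general
    (C : Type u) [Category.{v} C] [Abelian C] [HasCountableProducts C]
    -- countable products are exact:
    (hprodexact : ∀ (X Y : ℕ → C) (f : ∀ n, X n ⟶ Y n),
      (∀ n, Epi (f n)) → Epi (CategoryTheory.Limits.Pi.map f))
    (𝓑 : C → Prop)
    -- `𝓑` is closed under countable products:
    (hprod : ∀ X : ℕ → C, (∀ n, 𝓑 (X n)) → 𝓑 (∏ᶜ X))
    -- `𝓑` is closed under direct summands:
    (hsummand : ∀ (X Y : C) (i : X ⟶ Y) (r : Y ⟶ X), i ≫ r = 𝟙 X → 𝓑 Y → 𝓑 X)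
    -- every `𝓑`-periodic object belongs to `𝓑`:
    (hper : ∀ M : C, (∃ (B : C) (f : M ⟶ B) (g : B ⟶ M) (w : f ≫ g = 0),
      (ShortComplex.mk f g w).ShortExact ∧ 𝓑 B) → 𝓑 M)
    -- an acyclic complex with all terms in `𝓑`:
    (K : CochainComplex C ℤ) (hacyclic : ∀ i : ℤ, K.ExactAt i)
    (hterms : ∀ n : ℤ, 𝓑 (K.X n)) :
    ∀ n : ℤ, 𝓑 (kernel (K.d n (n + 1))) := by
  intro n
  -- products are only available over `ℕ`, so the degrees are enumerated by `e`
  let e : ℕ ≃ ℤ := Equiv.intEquivNat.symm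
  let σ : ℕ ≃ ℕ := e.trans ((Equiv.addRight 1).trans e.symm)
  have hσ : ∀ k, e (σ k) = e k + 1 := by simp [σ]
  have hrel : ∀ k, (ComplexShape.up ℤ).Rel (e k) (e (σ k)) := fun k => (hσ k).symm
  let Z : ℕ → C := fun k => kernel (K.d (e k) (e (σ k)))
  have hses := fun k => K.shortExact_kernel_ι_kernel_lift (hrel k) (hrel (σ k)) (hacyclic _)
  have := hprodexact _ _ _ fun k => (hses k).epi_g
  have hZ : 𝓑 (∏ᶜ Z) := hper _ (isPeriodic_pi 𝓑 σ hses (hprod _ fun k => hterms _))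
  obtain ⟨k, rfl⟩ := e.surjective n
  rw [← hσ]
  exact hsummand _ _ (Pi.ι Z k) (Pi.π Z k) (Pi.ι_π_eq_id Z k) hZ

/-- Derivation of "cocycles are cotorsion" from periodicity.  Let `C` be an abelian
category with exact countable products and `𝓑` a class of objects closed under countable
products and direct summands, such that every object of `C` is a quotient of an object `F`
with `Extⁿ(F, B) = 0` for all `B ∈ 𝓑`, `n ≥ 1`.  If every `𝓑`-periodic object belongs to
`𝓑`, then in any acyclic complex with all terms in `𝓑`, all objects of cocycles belong
to `𝓑`. -/
theorem cocycles_in_class_of_periodicity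
    (C : Type u) [Category.{v} C] [Abelian C] [HasCountableProducts C] [HasExt.{w} C]
    -- countable products are exact:
    (hprodexact : ∀ (X Y : ℕ → C) (f : ∀ n, X n ⟶ Y n),
      (∀ n, Epi (f n)) → Epi (CategoryTheory.Limits.Pi.map f))
    (𝓑 : C → Prop)
    -- `𝓑` is closed under countable products:
    (hprod : ∀ X : ℕ → C, (∀ n, 𝓑 (X n)) → 𝓑 (∏ᶜ X))
    -- `𝓑` is closed under direct summands:
    (hsummand : ∀ (X Y : C) (i : X ⟶ Y) (r : Y ⟶ X), i ≫ r = 𝟙 X → 𝓑 Y → 𝓑 X)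
    -- every object is a quotient of an object `F` with `Extⁿ(F, B) = 0` for `B ∈ 𝓑`, `n ≥ 1`:
    (hgen : ∀ X : C, ∃ (F : C) (π : F ⟶ X), Epi π ∧
      ∀ (n : ℕ), 1 ≤ n → ∀ B : C, 𝓑 B → ∀ x : Abelian.Ext F B n, x = 0)
    -- every `𝓑`-periodic object belongs to `𝓑`:
    (hper : ∀ M : C, (∃ (B : C) (f : M ⟶ B) (g : B ⟶ M) (w : f ≫ g = 0),
      (ShortComplex.mk f g w).ShortExact ∧ 𝓑 B) → 𝓑 M)
    -- an acyclic complex with all terms in `𝓑`: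
    (K : CochainComplex C ℤ) (hacyclic : ∀ i : ℤ, K.ExactAt i)
    (hterms : ∀ n : ℤ, 𝓑 (K.X n)) :
    ∀ n : ℤ, 𝓑 (kernel (K.d n (n + 1))) :=
  cocycles_in_class_of_periodicity_general C hprodexact 𝓑 hprod hsummand hper K hacyclic hterms
end
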